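/- Consider a proximal setup (‖·‖, ω) on Y, with Ω = sqrt(2[max_{y∈Y} ω(y) − min_{y∈Y} ω(y)]). Let u, u' ∈ Y be such that u ∈ Y° minimizes ω over a closed convex subset Y' of Y with u' ∈ Y' (so that ⟨ω'(u), u' − u⟩ ≥ 0), and let g ∈ E satisfy ‖g‖_* ≤ L and ⟨g, u − u'⟩ ≥ ℓ for some ℓ > 0. Then ‖u − u'‖ ≥ ℓ/L and ω(u') − ω(u) ≥ ℓ²/(2L²). Consequently, if u_1, ..., u_T ∈ Y is a sequence such that each consecutive pair (u_τ, u_{τ+1}) satisfies these hypotheses with the same ℓ and L, then T ≤ Ω²L²/ℓ² + 1. -/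

import Mathlib

/-
Points of the relative interior of `Y` carry subgradients of `ω` (Hahn–Banach applied to the strict
epigraph inside the affine span of `Y`). On the convex set of such points the selection `ω'` is
strongly monotone, and integrating this along segments shows that `ω` is `1`-strongly convex with
respect to `‖·‖` there; every point of `Y` is a limit of such points along a segment, so by
continuity `ω` is `1`-strongly convex on all of `Y`. If `u` minimizes `ω` on a convex `Y' ∋ u'`,
strong convexity gives `ω u' - ω u ≥ ‖u - u'‖² / 2`, while `ℓ ≤ ⟪g, u - u'⟫ ≤ L ‖u - u'‖`.
Along a sequence each step raises `ω` by at least `ℓ² / (2 L²)`, and the total rise is at most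
`max ω - min ω = Ω² / 2`.
-/

open RealInnerProductSpace Set Filter Topology

section DualNorm

variable {E : Type*} [NormedAddCommGroup E] [InnerProductSpace ℝ E] [FiniteDimensional ℝ E]

theorem Seminorm.exists_pos_mul_norm_le (p : Seminorm ℝ E) (hp : ∀ v, p v = 0 → v = 0) :
    ∃ c > 0, ∀ v, c * ‖v‖ ≤ p v := by
  rcases subsingleton_or_nontrivial E with hE | hE
  · exact ⟨1, one_pos, fun v => by simp [Subsingleton.elim v 0]⟩
  obtain ⟨v₀, hv₀, hmin⟩ := (isCompact_sphere (0 : E) 1).exists_isMinOn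
    (NormedSpace.sphere_nonempty.2 zero_le_one) p.convexOn.locallyLipschitz.continuous.continuousOn
  rw [mem_sphere_zero_iff_norm] at hv₀
  refine ⟨p v₀, (apply_nonneg p v₀).lt_of_ne fun h => ?_, fun v => ?_⟩
  · simp [hp v₀ h.symm] at hv₀
  rcases eq_or_ne v 0 with rfl | hv
  · simp
  have hvn := norm_pos_iff.2 hv
  have h : p v₀ ≤ p (‖v‖⁻¹ • v) := hmin (by simp [norm_smul, hvn.ne'])
  rw [map_smul_eq_mul, norm_inv, norm_norm, le_inv_mul_iff₀ hvn] at h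
  linarith

theorem Seminorm.inner_le_sSup_mul (p : Seminorm ℝ E) (hp : ∀ v, p v = 0 → v = 0) (ξ v : E) :
    ⟪ξ, v⟫ ≤ sSup {r : ℝ | ∃ u : E, p u ≤ 1 ∧ r = ⟪ξ, u⟫} * p v := by
  obtain ⟨c, hc, hcp⟩ := p.exists_pos_mul_norm_le hp
  have hbdd : BddAbove {r : ℝ | ∃ u : E, p u ≤ 1 ∧ r = ⟪ξ, u⟫} := by
    refine ⟨‖ξ‖ / c, ?_⟩
    rintro _ ⟨u, hu, rfl⟩
    have hu' : ‖u‖ ≤ 1 / c := by rw [le_div_iff₀ hc]; linarith [hcp u]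
    calc ⟪ξ, u⟫ ≤ ‖ξ‖ * ‖u‖ := real_inner_le_norm ξ u
      _ ≤ ‖ξ‖ * (1 / c) := by gcongr
      _ = ‖ξ‖ / c := by ring
  rcases eq_or_ne v 0 with rfl | hv
  · simp
  have hpv : 0 < p v := (apply_nonneg p v).lt_of_ne fun h => hv (hp v h.symm)
  have hunit : p ((p v)⁻¹ • v) ≤ 1 := by
    rw [map_smul_eq_mul, norm_inv, Real.norm_of_nonneg hpv.le, inv_mul_cancel₀ hpv.ne']
  have h := le_csSup hbdd ⟨_, hunit, rfl⟩
  rw [real_inner_smul_right, inv_mul_le_iff₀ hpv] at h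
  linarith

end DualNorm

section Subgradient

variable {F : Type*} [NormedAddCommGroup F] [InnerProductSpace ℝ F]

def HasSubgradientWithin (f : F → ℝ) (s : Set F) (x : F) : Prop :=
  ∃ g : F, ∀ z ∈ s, f x + ⟪g, z - x⟫ ≤ f z

theorem ContinuousLinearMap.apply_prod_eq (φ : StrongDual ℝ (F × ℝ)) (y : F) (r : ℝ) :
    φ (y, r) = φ (y, 0) + r * φ (0, 1) := by
  rw [← smul_eq_mul, ← map_smul, ← map_add]
  simp

variable [FiniteDimensional ℝ F] {s : Set F} {f : F → ℝ} {x : F}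

theorem ConvexOn.exists_dual_le_of_mem_interior (hf : ConvexOn ℝ s f) (hx : x ∈ interior s) :
    ∃ φ : StrongDual ℝ (F × ℝ), φ (0, 1) < 0 ∧ ∀ z ∈ interior s, φ (z, f z) ≤ φ (x, f x) := by
  set S : Set (F × ℝ) := {q | q.1 ∈ interior s ∧ f q.1 < q.2}
  have hfc : ContinuousOn f (interior s) := hf.continuousOn_interior
  have hSopen : IsOpen S := by
    have hg : ContinuousOn (fun q : F × ℝ => q.2 - f q.1) (interior s ×ˢ univ) :=
      continuousOn_snd.sub (hfc.comp continuousOn_fst fun q hq => hq.1)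
    convert hg.isOpen_inter_preimage (isOpen_interior.prod isOpen_univ) (isOpen_Ioi (a := 0))
      using 1
    ext q
    simp [S, sub_pos]
  obtain ⟨φ, hφ⟩ := geometric_hahn_banach_open_point
    (hf.subset interior_subset hf.1.interior).convex_strict_epigraph hSopen
    (x := (x, f x)) fun h => h.2.false
  refine ⟨φ, ?_, fun z hz => ?_⟩
  · have := hφ (x, f x + 1) ⟨hx, lt_add_one _⟩
    rw [φ.apply_prod_eq x, φ.apply_prod_eq x (f x)] at this
    linarith
  · have hlim : Tendsto (fun r => φ (z, r)) (𝓝[>] (f z)) (𝓝 (φ (z, f z))) :=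
      ((φ.continuous.comp (Continuous.prodMk_right z)).tendsto _).mono_left nhdsWithin_le_nhds
    exact le_of_tendsto hlim (eventually_nhdsWithin_of_forall fun r hr => (hφ (z, r) ⟨hz, hr⟩).le)

theorem ConvexOn.hasSubgradientWithin_of_mem_interior (hf : ConvexOn ℝ s f) (hx : x ∈ interior s) :
    HasSubgradientWithin f s x := by
  obtain ⟨φ, hφ0, hφ⟩ := hf.exists_dual_le_of_mem_interior hx
  set c := -φ (0, 1)
  have hc : 0 < c := neg_pos.2 hφ0
  set ψ := φ.comp (.inl ℝ F ℝ)
  set g : F := (InnerProductSpace.toDual ℝ F).symm (c⁻¹ • ψ)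
  have hg : ∀ v, ⟪g, v⟫ = c⁻¹ * ψ v := fun v => by
    simp [g, real_inner_smul_left]
  have hint : ∀ z ∈ interior s, f x + ⟪g, z - x⟫ ≤ f z := fun z hz => by
    have := hφ z hz
    rw [φ.apply_prod_eq z, φ.apply_prod_eq x (f x)] at this
    have key : c⁻¹ * (ψ z - ψ x) ≤ f z - f x := by
      rw [inv_mul_le_iff₀ hc]
      simp only [ψ, ContinuousLinearMap.comp_apply, ContinuousLinearMap.inl_apply]
      linarith
    rw [hg, map_sub]
    linarith
  refine ⟨g, fun z hz => ?_⟩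
  have hmid : z + (2⁻¹ : ℝ) • (x - z) ∈ interior s :=
    hf.1.add_smul_sub_mem_interior hz hx ⟨by norm_num, by norm_num⟩
  have h1 := hint _ hmid
  have h2 := hf.2 hz (interior_subset hx) (by norm_num : (0:ℝ) ≤ 2⁻¹) (by norm_num : (0:ℝ) ≤ 2⁻¹)
    (by norm_num)
  have hm : z + (2⁻¹ : ℝ) • (x - z) = (2⁻¹ : ℝ) • z + (2⁻¹ : ℝ) • x := by module
  have hm' : z + (2⁻¹ : ℝ) • (x - z) - x = (2⁻¹ : ℝ) • (z - x) := by module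
  rw [hm', real_inner_smul_right] at h1
  rw [← hm, smul_eq_mul, smul_eq_mul] at h2
  linarith

end Subgradient

section RelativeInterior

variable {E : Type*} [NormedAddCommGroup E] [InnerProductSpace ℝ E] [FiniteDimensional ℝ E]
  {Y : Set E} {f : E → ℝ}

theorem ConvexOn.exists_convex_subset_hasSubgradientWithin (hf : ConvexOn ℝ Y f)
    (hY : Y.Nonempty) :
    ∃ R ⊆ Y, Convex ℝ R ∧ (∃ w, ∀ a ∈ Y, ∀ ε ∈ Ioc (0 : ℝ) 1, a + ε • (w - a) ∈ R) ∧
      ∀ y ∈ R, HasSubgradientWithin f Y y := by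
  obtain ⟨x₀, hx₀⟩ := hY
  set V := Submodule.span ℝ ((· - x₀) '' Y)
  set A : V →ᵃ[ℝ] E := AffineMap.const ℝ V x₀ + V.subtype.toAffineMap
  have hA : ∀ v, A v = x₀ + v := fun v => by simp [A]
  have hV : ∀ y ∈ Y, y - x₀ ∈ V := fun y hy => Submodule.subset_span ⟨y, hy, rfl⟩
  have hAV : ∀ y (hy : y ∈ Y), A ⟨y - x₀, hV y hy⟩ = y := fun y hy => by simp [hA]
  set s := A ⁻¹' Y
  have hsY : ∀ y (hy : y ∈ Y), (⟨y - x₀, hV y hy⟩ : V) ∈ s := fun y hy => by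
    simpa only [s, mem_preimage, hAV y hy]
  have hs : Convex ℝ s := hf.1.affine_preimage A
  -- `s` spans `V`, so it has nonempty interior there
  have hint : (interior s).Nonempty := by
    have h0 : (0 : V) ∈ s := by simpa [s, hA]
    rw [hs.interior_nonempty_iff_affineSpan_eq_top,
      AffineSubspace.affineSpan_eq_top_iff_vectorSpan_eq_top_of_nonempty _ _ _ ⟨0, h0⟩,
      vectorSpan_eq_span_vsub_set_right ℝ h0]
    have hs' : (· -ᵥ (0 : V)) '' s = ((↑) : V → E) ⁻¹' ((· - x₀) '' Y) := by
      ext v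
      simp only [vsub_eq_sub, sub_zero, image_id', mem_preimage, mem_image]
      exact ⟨fun h => ⟨_, h, by simp [hA]⟩, by rintro ⟨y, hy, h⟩; simpa [s, hA, ← h]⟩
    rw [hs']
    exact Submodule.span_span_coe_preimage
  obtain ⟨v₀, hv₀⟩ := hint
  -- `A '' interior s` is the relative interior of `Y`
  refine ⟨A '' interior s, ?_, hs.interior.affine_image A, ⟨A v₀, fun a ha ε hε => ?_⟩, ?_⟩
  · rintro _ ⟨v, hv, rfl⟩
    exact (interior_subset hv : v ∈ s)
  · refine ⟨_, hs.add_smul_sub_mem_interior (hsY a ha) hv₀ hε, ?_⟩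
    simp only [hA, Submodule.coe_add, Submodule.coe_smul, Submodule.coe_sub]
    module
  · rintro _ ⟨v, hv, rfl⟩
    obtain ⟨g, hg⟩ := (hf.comp_affineMap A).hasSubgradientWithin_of_mem_interior hv
    refine ⟨g, fun z hz => ?_⟩
    have := hg _ (hsY z hz)
    rw [Function.comp_apply, Function.comp_apply, hAV z hz, Submodule.coe_inner] at this
    convert this using 3
    simp [hA]
    abel

end RelativeInterior

theorem le_of_forall_sub_ge_neg_mul_sq {ψ : ℝ → ℝ} {K : ℝ}
    (h : ∀ t ∈ Icc (0 : ℝ) 1, ∀ s ∈ Icc (0 : ℝ) 1, t ≤ s → -(K * (s - t) ^ 2) ≤ ψ s - ψ t) :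
    ψ 0 ≤ ψ 1 := by
  have hn : ∀ n : ℕ, -K * (1 / ((n : ℝ) + 1)) ≤ ψ 1 - ψ 0 := fun n => by
    set m : ℝ := n + 1
    have hm : 0 < m := by positivity
    have hmem : ∀ i ≤ n + 1, (i : ℝ) / m ∈ Icc (0 : ℝ) 1 := fun i hi =>
      ⟨by positivity, div_le_one_of_le₀ (by simp [m]; exact_mod_cast hi) hm.le⟩
    have hstep : ∀ i ∈ Finset.range (n + 1), -(K * (1 / m) ^ 2) ≤
        ψ ((i + 1 : ℕ) / m) - ψ ((i : ℕ) / m) := fun i hi => by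
      have hi := Finset.mem_range.1 hi
      have := h _ (hmem i hi.le) _ (hmem (i + 1) hi) (by gcongr; simp)
      rwa [show ((i + 1 : ℕ) : ℝ) / m - (i : ℕ) / m = 1 / m by push_cast; ring] at this
    have hsum := Finset.sum_le_sum hstep
    rw [Finset.sum_range_sub (fun i : ℕ => ψ (i / m)), Finset.sum_const, Finset.card_range,
      nsmul_eq_mul] at hsum
    have h1 : ((n + 1 : ℕ) : ℝ) / m = 1 := by simp [m, hm.ne']
    simp only [h1, Nat.cast_zero, zero_div] at hsum
    calc -K * (1 / m) = ((n + 1 : ℕ) : ℝ) * -(K * (1 / m) ^ 2) := by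
          simp only [m]; push_cast; field_simp
      _ ≤ ψ 1 - ψ 0 := hsum
  have hlim : Tendsto (fun n : ℕ => -K * (1 / ((n : ℝ) + 1))) atTop (𝓝 (-K * 0)) :=
    tendsto_one_div_add_atTop_nhds_zero_nat.const_mul _
  linarith [le_of_tendsto' hlim hn]

theorem natCast_mul_le_sub_of_forall_le_sub {f : ℕ → ℝ} {δ : ℝ} (n : ℕ)
    (h : ∀ i < n, δ ≤ f (i + 1) - f i) : n * δ ≤ f n - f 0 := by
  induction n with
  | zero => simp
  | succ n ih =>
    push_cast
    linarith [ih fun i hi => h i (by omega), h n (by omega)]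

theorem natCast_le_div_add_one_of_forall_le_sub {f : ℕ → ℝ} {δ C : ℝ} {T : ℕ} (hδ : 0 < δ)
    (hT : 1 ≤ T) (hstep : ∀ τ, 1 ≤ τ → τ < T → δ ≤ f (τ + 1) - f τ) (hC : f T - f 1 ≤ C) :
    (T : ℝ) ≤ C / δ + 1 := by
  have h := natCast_mul_le_sub_of_forall_le_sub (f := fun i => f (i + 1)) (T - 1) fun i hi =>
    hstep (i + 1) (by omega) (by omega)
  simp only [Nat.sub_add_cancel hT, zero_add, Nat.cast_sub hT, Nat.cast_one] at h
  rw [← sub_le_iff_le_add, le_div_iff₀ hδ]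
  linarith

def StrongConvexOnWith {E : Type*} [AddCommGroup E] [Module ℝ E] (p : Seminorm ℝ E) (s : Set E)
    (f : E → ℝ) : Prop :=
  ∀ ⦃a⦄, a ∈ s → ∀ ⦃b⦄, b ∈ s → ∀ ⦃t : ℝ⦄, t ∈ Icc (0 : ℝ) 1 →
    f (a + t • (b - a)) + t * (1 - t) * p (b - a) ^ 2 / 2 ≤ (1 - t) * f a + t * f b

section StrongConvexity

variable {E : Type*} [NormedAddCommGroup E] [InnerProductSpace ℝ E] {p : Seminorm ℝ E}
  {R Y : Set E} {ω : E → ℝ} {ω' : E → E}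

theorem add_inner_add_sq_div_two_le (hR : Convex ℝ R)
    (hsub : ∀ y ∈ R, ∀ z ∈ R, ω y + ⟪ω' y, z - y⟫ ≤ ω z)
    (hmono : ∀ y ∈ R, ∀ y' ∈ R, p (y - y') ^ 2 ≤ ⟪ω' y - ω' y', y - y'⟫)
    {a b : E} (ha : a ∈ R) (hb : b ∈ R) :
    ω a + ⟪ω' a, b - a⟫ + p (b - a) ^ 2 / 2 ≤ ω b := by
  set z : ℝ → E := fun t => a + t • (b - a)
  set c : ℝ → ℝ := fun t => ⟪ω' (z t), b - a⟫
  set M := p (b - a) ^ 2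
  have hz : ∀ t ∈ Icc (0 : ℝ) 1, z t ∈ R := fun t ht => hR.add_smul_sub_mem ha hb ht
  have hzsub : ∀ s t, z s - z t = (s - t) • (b - a) := fun s t => by simp only [z]; module
  have hc : ∀ t ∈ Icc (0 : ℝ) 1, t * M ≤ c t - c 0 := fun t ht => by
    rcases ht.1.eq_or_lt with rfl | ht0
    · simp
    have := hmono _ (hz t ht) _ (hz 0 ⟨le_rfl, zero_le_one⟩)
    rw [hzsub, sub_zero, map_smul_eq_mul, Real.norm_of_nonneg ht0.le, real_inner_smul_right,
      inner_sub_left] at this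
    exact le_of_mul_le_mul_left (by nlinarith) ht0
  -- `t ↦ ω (z t) - t c(0) - M t²/2` has increments bounded below by `-M (s - t)² / 2`
  have hψ := le_of_forall_sub_ge_neg_mul_sq (ψ := fun t => ω (z t) - t * c 0 - M / 2 * t ^ 2)
    (K := M / 2) fun t ht s hs hts => by
      have h1 := hsub _ (hz t ht) _ (hz s hs)
      rw [hzsub, real_inner_smul_right] at h1
      nlinarith [mul_le_mul_of_nonneg_left (hc t ht) (sub_nonneg.2 hts)]
  norm_num [z, c] at hψ
  linarith

theorem strongConvexOnWith_of_strongMono (hR : Convex ℝ R)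
    (hsub : ∀ y ∈ R, ∀ z ∈ R, ω y + ⟪ω' y, z - y⟫ ≤ ω z)
    (hmono : ∀ y ∈ R, ∀ y' ∈ R, p (y - y') ^ 2 ≤ ⟪ω' y - ω' y', y - y'⟫) :
    StrongConvexOnWith p R ω := by
  intro a ha b hb t ht
  set zt := a + t • (b - a)
  have hzt : zt ∈ R := hR.add_smul_sub_mem ha hb ht
  have hb' := add_inner_add_sq_div_two_le hR hsub hmono hzt hb
  have ha' := add_inner_add_sq_div_two_le hR hsub hmono hzt ha
  rw [show b - zt = (1 - t) • (b - a) by module, map_smul_eq_mul,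
    Real.norm_of_nonneg (sub_nonneg.2 ht.2), real_inner_smul_right] at hb'
  rw [show a - zt = (-t) • (b - a) by module, map_smul_eq_mul, norm_neg,
    Real.norm_of_nonneg ht.1, real_inner_smul_right] at ha'
  nlinarith [mul_le_mul_of_nonneg_left hb' ht.1,
    mul_le_mul_of_nonneg_left ha' (sub_nonneg.2 ht.2)]

theorem StrongConvexOnWith.of_continuousOn_of_forall_add_smul_sub_mem
    (h : StrongConvexOnWith p R ω) (hRY : R ⊆ Y) (hY : Convex ℝ Y) (hω : ContinuousOn ω Y)
    {w : E} (hw : ∀ a ∈ Y, ∀ ε ∈ Ioc (0 : ℝ) 1, a + ε • (w - a) ∈ R) :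
    StrongConvexOnWith p Y ω := by
  intro a ha b hb t ht
  set A : ℝ → E := fun ε => a + ε • (w - a)
  set B : ℝ → E := fun ε => b + ε • (w - b)
  have hlim : ∀ γ : ℝ → E, Continuous γ → (∀ ε ∈ Ioc (0 : ℝ) 1, γ ε ∈ Y) → γ 0 ∈ Y →
      Tendsto (fun ε => ω (γ ε)) (𝓝[>] 0) (𝓝 (ω (γ 0))) := fun γ hγ hγY h0 =>
    (hω _ h0).tendsto.comp (tendsto_nhdsWithin_iff.2
      ⟨(hγ.tendsto 0).mono_left nhdsWithin_le_nhds, mem_of_superset (Ioc_mem_nhdsGT one_pos) hγY⟩)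
  have hp : ∀ ε, p (B ε - A ε) = |1 - ε| * p (b - a) := fun ε => by
    rw [show B ε - A ε = (1 - ε) • (b - a) by simp only [A, B]; module, map_smul_eq_mul,
      Real.norm_eq_abs]
  have hpt : Tendsto (fun ε => t * (1 - t) * p (B ε - A ε) ^ 2 / 2) (𝓝[>] 0)
      (𝓝 (t * (1 - t) * p (b - a) ^ 2 / 2)) := by
    simp_rw [hp]
    exact (Continuous.tendsto' (by fun_prop) 0 _ (by simp)).mono_left nhdsWithin_le_nhds
  have hAY : ∀ ε ∈ Ioc (0 : ℝ) 1, A ε ∈ Y := fun ε hε => hRY (hw a ha ε hε)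
  have hBY : ∀ ε ∈ Ioc (0 : ℝ) 1, B ε ∈ Y := fun ε hε => hRY (hw b hb ε hε)
  have hle := le_of_tendsto_of_tendsto
    ((hlim (fun ε => A ε + t • (B ε - A ε)) (by fun_prop)
      (fun ε hε => hY.add_smul_sub_mem (hAY ε hε) (hBY ε hε) ht)
      (by simpa [A, B] using hY.add_smul_sub_mem ha hb ht)).add hpt)
    (((hlim A (by fun_prop) hAY (by simpa [A])).const_mul (1 - t)).add
      ((hlim B (by fun_prop) hBY (by simpa [B])).const_mul t))
    (mem_of_superset (Ioc_mem_nhdsGT one_pos) fun ε hε => h (hw a ha ε hε) (hw b hb ε hε) ht)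
  simpa [A, B] using hle

theorem StrongConvexOnWith.sq_div_two_le_sub_of_isMinOn (h : StrongConvexOnWith p Y ω)
    {Y' : Set E} (hY' : Convex ℝ Y') (hY'Y : Y' ⊆ Y) {u u' : E} (hu : u ∈ Y') (hu' : u' ∈ Y')
    (hmin : IsMinOn ω Y' u) :
    p (u' - u) ^ 2 / 2 ≤ ω u' - ω u := by
  have key : ∀ t ∈ Ioo (0 : ℝ) 1, (1 - t) * (p (u' - u) ^ 2 / 2) ≤ ω u' - ω u := fun t ht => by
    have h1 := h (hY'Y hu) (hY'Y hu') (Ioo_subset_Icc_self ht)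
    have h2 := isMinOn_iff.1 hmin _ (hY'.add_smul_sub_mem hu hu' (Ioo_subset_Icc_self ht))
    exact le_of_mul_le_mul_left (by nlinarith) ht.1
  have hlim : Tendsto (fun t => (1 - t) * (p (u' - u) ^ 2 / 2)) (𝓝[>] 0)
      (𝓝 (p (u' - u) ^ 2 / 2)) :=
    (Continuous.tendsto' (by fun_prop) 0 _ (by simp)).mono_left nhdsWithin_le_nhds
  exact le_of_tendsto hlim (mem_of_superset (Ioo_mem_nhdsGT one_pos) key)

theorem pos_and_div_le_of_le_inner {g v : E} {D L ℓ : ℝ} (hpair : ∀ v, ⟪g, v⟫ ≤ D * p v)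
    (hDL : D ≤ L) (hℓ : 0 < ℓ) (hgℓ : ℓ ≤ ⟪g, v⟫) : 0 < L ∧ ℓ / L ≤ p v := by
  have h : ℓ ≤ L * p v :=
    hgℓ.trans ((hpair v).trans (mul_le_mul_of_nonneg_right hDL (apply_nonneg p v)))
  have hL : 0 < L := by
    by_contra! hL
    nlinarith [apply_nonneg p v]
  exact ⟨hL, by rw [div_le_iff₀ hL]; linarith⟩

theorem StrongConvexOnWith.step_bound (h : StrongConvexOnWith p Y ω)
    {Y' : Set E} (hY' : Convex ℝ Y') (hY'Y : Y' ⊆ Y) {u u' : E} (hu : u ∈ Y') (hu' : u' ∈ Y')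
    (hmin : IsMinOn ω Y' u) {g : E} {D L ℓ : ℝ} (hpair : ∀ v, ⟪g, v⟫ ≤ D * p v) (hDL : D ≤ L)
    (hℓ : 0 < ℓ) (hgℓ : ℓ ≤ ⟪g, u - u'⟫) :
    0 < L ∧ ℓ / L ≤ p (u - u') ∧ ℓ ^ 2 / (2 * L ^ 2) ≤ ω u' - ω u := by
  obtain ⟨hL, hdist⟩ := pos_and_div_le_of_le_inner hpair hDL hℓ hgℓ
  have hgap := h.sq_div_two_le_sub_of_isMinOn hY' hY'Y hu hu' hmin
  rw [map_sub_rev] at hgap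
  refine ⟨hL, hdist, ?_⟩
  calc ℓ ^ 2 / (2 * L ^ 2) = (ℓ / L) ^ 2 / 2 := by field_simp
    _ ≤ p (u - u') ^ 2 / 2 := by gcongr
    _ ≤ ω u' - ω u := hgap

theorem ConvexOn.strongConvexOnWith [FiniteDimensional ℝ E] {Yo : Set E} (hω : ConvexOn ℝ Y ω)
    (hY : Y.Nonempty) (hωc : ContinuousOn ω Y)
    (hYo : ∀ y ∈ Y, HasSubgradientWithin ω Y y → y ∈ Yo)
    (hsub : ∀ y ∈ Yo, ∀ z ∈ Y, ω y + ⟪ω' y, z - y⟫ ≤ ω z)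
    (hmono : ∀ y ∈ Yo, ∀ y' ∈ Yo, p (y - y') ^ 2 ≤ ⟪ω' y - ω' y', y - y'⟫) :
    StrongConvexOnWith p Y ω := by
  obtain ⟨R, hRY, hR, ⟨w, hw⟩, hRsub⟩ := hω.exists_convex_subset_hasSubgradientWithin hY
  have hRYo : ∀ y ∈ R, y ∈ Yo := fun y hy => hYo y (hRY hy) (hRsub y hy)
  exact (strongConvexOnWith_of_strongMono hR (fun y hy z hz => hsub y (hRYo y hy) z (hRY hz))
    fun y hy y' hy' => hmono y (hRYo y hy) y' (hRYo y' hy'))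
    |>.of_continuousOn_of_forall_add_smul_sub_mem hRY hω.1 hωc hw

end StrongConvexity

theorem stmt14_general
    {E : Type*} [NormedAddCommGroup E] [InnerProductSpace ℝ E] [FiniteDimensional ℝ E]
    (Y : Set E) (hYcl : IsClosed Y)
    (hYbd : Bornology.IsBounded Y)
    (nrm : E → ℝ)
    (hnrm_add : ∀ u v, nrm (u + v) ≤ nrm u + nrm v)
    (hnrm_smul : ∀ (c : ℝ) (u : E), nrm (c • u) = |c| * nrm u)
    (hnrm_zero : ∀ u, nrm u = 0 ↔ u = 0)
    (dnrm : E → ℝ)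
    (hdnrm : ∀ ξ : E, dnrm ξ = sSup {r : ℝ | ∃ u : E, nrm u ≤ 1 ∧ r = ⟪ξ, u⟫})
    (ω : E → ℝ) (hωcont : ContinuousOn ω Y) (hωconv : ConvexOn ℝ Y ω)
    (Yo : Set E) (hYo : Yo = {y ∈ Y | ∃ s : E, ∀ z ∈ Y, ω y + ⟪s, z - y⟫ ≤ ω z})
    (ω' : E → E)
    (hω'sub : ∀ y ∈ Yo, ∀ z ∈ Y, ω y + ⟪ω' y, z - y⟫ ≤ ω z)
    (hstrong : ∀ y ∈ Yo, ∀ y' ∈ Yo, nrm (y - y') ^ 2 ≤ ⟪ω' y - ω' y', y - y'⟫)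
    (Ω : ℝ) (hΩ : Ω = Real.sqrt (2 * (sSup (ω '' Y) - sInf (ω '' Y))))
    (L ℓ : ℝ) (hℓ : 0 < ℓ)
    -- the pair (u, u')
    (Y' : Set E) (hY'cv : Convex ℝ Y') (hY'Y : Y' ⊆ Y)
    (u u' : E) (hu : u ∈ Y') (hu' : u' ∈ Y')
    (humin : IsMinOn ω Y' u)
    (g : E) (hgL : dnrm g ≤ L) (hgℓ : ℓ ≤ ⟪g, u - u'⟫) :
    (ℓ / L ≤ nrm (u - u') ∧ ℓ ^ 2 / (2 * L ^ 2) ≤ ω u' - ω u) ∧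
    -- consecutive-pairs consequence
    (∀ (T : ℕ) (useq : ℕ → E),
      (∀ τ : ℕ, 1 ≤ τ → τ < T →
        useq τ ∈ Y ∧ useq (τ + 1) ∈ Y ∧ useq τ ∈ Yo ∧
        (∃ Y'' : Set E, IsClosed Y'' ∧ Convex ℝ Y'' ∧ Y'' ⊆ Y ∧
          useq τ ∈ Y'' ∧ useq (τ + 1) ∈ Y'' ∧ IsMinOn ω Y'' (useq τ)) ∧
        0 ≤ ⟪ω' (useq τ), useq (τ + 1) - useq τ⟫ ∧
        ∃ g' : E, dnrm g' ≤ L ∧ ℓ ≤ ⟪g', useq τ - useq (τ + 1)⟫) →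
      (T : ℝ) ≤ Ω ^ 2 * L ^ 2 / ℓ ^ 2 + 1) := by
  set p : Seminorm ℝ E := Seminorm.of nrm hnrm_add fun c v => by rw [hnrm_smul, Real.norm_eq_abs]
  have hconv : StrongConvexOnWith p Y ω := hωconv.strongConvexOnWith ⟨u, hY'Y hu⟩ hωcont
    (fun y hy hg => hYo ▸ ⟨hy, hg⟩) hω'sub hstrong
  have hpair : ∀ ξ v, ⟪ξ, v⟫ ≤ dnrm ξ * p v := fun ξ v =>
    hdnrm ξ ▸ p.inner_le_sSup_mul (fun v => (hnrm_zero v).1) ξ v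
  refine ⟨(hconv.step_bound hY'cv hY'Y hu hu' humin (hpair g) hgL hℓ hgℓ).2, fun T useq hseq => ?_⟩
  have hstep : ∀ τ, 1 ≤ τ → τ < T →
      0 < L ∧ ℓ ^ 2 / (2 * L ^ 2) ≤ ω (useq (τ + 1)) - ω (useq τ) := fun τ h1 h2 => by
    obtain ⟨-, -, -, ⟨Y'', -, hcv, hsub, hm1, hm2, hmin⟩, -, g', hg'L, hg'ℓ⟩ := hseq τ h1 h2
    obtain ⟨hL, -, hgap⟩ := hconv.step_bound hcv hsub hm1 hm2 hmin (hpair g') hg'L hℓ hg'ℓ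
    exact ⟨hL, hgap⟩
  rcases Nat.lt_or_ge T 2 with hT | hT
  · have : (T : ℝ) ≤ 1 := by exact_mod_cast Nat.lt_succ_iff.1 hT
    linarith [show 0 ≤ Ω ^ 2 * L ^ 2 / ℓ ^ 2 by positivity]
  obtain ⟨n, rfl⟩ := Nat.exists_eq_add_of_le' (one_le_two.trans hT)
  have hL := (hstep 1 le_rfl hT).1
  have himg := (Metric.isCompact_of_isClosed_isBounded hYcl hYbd).image_of_continuousOn hωcont
  have hmem1 : useq 1 ∈ Y := (hseq 1 le_rfl hT).1
  have hosc : ω (useq (n + 1)) - ω (useq 1) ≤ sSup (ω '' Y) - sInf (ω '' Y) :=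
    sub_le_sub (le_csSup himg.bddAbove ⟨_, (hseq n (by omega) (by omega)).2.1, rfl⟩)
      (csInf_le himg.bddBelow ⟨_, hmem1, rfl⟩)
  have hΩ2 : Ω ^ 2 = 2 * (sSup (ω '' Y) - sInf (ω '' Y)) := by
    have := csInf_le_csSup (s := ω '' Y) ⟨_, mem_image_of_mem ω hmem1⟩ himg.bddBelow himg.bddAbove
    rw [hΩ, Real.sq_sqrt (by linarith)]
  calc ((n + 1 : ℕ) : ℝ) ≤ (sSup (ω '' Y) - sInf (ω '' Y)) / (ℓ ^ 2 / (2 * L ^ 2)) + 1 :=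
        natCast_le_div_add_one_of_forall_le_sub (f := fun τ => ω (useq τ)) (by positivity)
          (by omega) (fun τ h1 h2 => (hstep τ h1 h2).2) hosc
    _ = Ω ^ 2 * L ^ 2 / ℓ ^ 2 + 1 := by rw [hΩ2]; field_simp

/-- Per-phase step bound in the analysis of NERML: if `u ∈ Y°` minimizes `ω` over a closed
convex `Y' ⊆ Y` containing `u'` (so `⟨ω'(u), u' − u⟩ ≥ 0`) and `g` satisfies `‖g‖_* ≤ L`
and `⟨g, u − u'⟩ ≥ ℓ > 0`, then `‖u − u'‖ ≥ ℓ/L` and `ω(u') − ω(u) ≥ ℓ²/(2L²)`;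
consequently a sequence of points in `Y` whose consecutive pairs satisfy these hypotheses
has length `T ≤ Ω²L²/ℓ² + 1`. -/
theorem stmt14
    {E : Type*} [NormedAddCommGroup E] [InnerProductSpace ℝ E] [FiniteDimensional ℝ E]
    (Y : Set E) (hYne : Y.Nonempty) (hYcl : IsClosed Y)
    (hYbd : Bornology.IsBounded Y) (hYcv : Convex ℝ Y)
    (nrm : E → ℝ)
    (hnrm_add : ∀ u v, nrm (u + v) ≤ nrm u + nrm v)
    (hnrm_smul : ∀ (c : ℝ) (u : E), nrm (c • u) = |c| * nrm u)
    (hnrm_zero : ∀ u, nrm u = 0 ↔ u = 0)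
    (dnrm : E → ℝ)
    (hdnrm : ∀ ξ : E, dnrm ξ = sSup {r : ℝ | ∃ u : E, nrm u ≤ 1 ∧ r = ⟪ξ, u⟫})
    (ω : E → ℝ) (hωcont : ContinuousOn ω Y) (hωconv : ConvexOn ℝ Y ω)
    (Yo : Set E) (hYo : Yo = {y ∈ Y | ∃ s : E, ∀ z ∈ Y, ω y + ⟪s, z - y⟫ ≤ ω z})
    (ω' : E → E)
    (hω'sub : ∀ y ∈ Yo, ∀ z ∈ Y, ω y + ⟪ω' y, z - y⟫ ≤ ω z)
    (hω'cont : ContinuousOn ω' Yo)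
    (hstrong : ∀ y ∈ Yo, ∀ y' ∈ Yo, nrm (y - y') ^ 2 ≤ ⟪ω' y - ω' y', y - y'⟫)
    (Ω : ℝ) (hΩ : Ω = Real.sqrt (2 * (sSup (ω '' Y) - sInf (ω '' Y))))
    (L ℓ : ℝ) (hℓ : 0 < ℓ)
    -- the pair (u, u')
    (Y' : Set E) (hY'cl : IsClosed Y') (hY'cv : Convex ℝ Y') (hY'Y : Y' ⊆ Y)
    (u u' : E) (hu : u ∈ Y') (hu' : u' ∈ Y') (huYo : u ∈ Yo)
    (humin : IsMinOn ω Y' u)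
    (hvi : 0 ≤ ⟪ω' u, u' - u⟫)
    (g : E) (hgL : dnrm g ≤ L) (hgℓ : ℓ ≤ ⟪g, u - u'⟫) :
    (ℓ / L ≤ nrm (u - u') ∧ ℓ ^ 2 / (2 * L ^ 2) ≤ ω u' - ω u) ∧
    -- consecutive-pairs consequence
    (∀ (T : ℕ) (useq : ℕ → E),
      (∀ τ : ℕ, 1 ≤ τ → τ < T →
        useq τ ∈ Y ∧ useq (τ + 1) ∈ Y ∧ useq τ ∈ Yo ∧
        (∃ Y'' : Set E, IsClosed Y'' ∧ Convex ℝ Y'' ∧ Y'' ⊆ Y ∧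
          useq τ ∈ Y'' ∧ useq (τ + 1) ∈ Y'' ∧ IsMinOn ω Y'' (useq τ)) ∧
        0 ≤ ⟪ω' (useq τ), useq (τ + 1) - useq τ⟫ ∧
        ∃ g' : E, dnrm g' ≤ L ∧ ℓ ≤ ⟪g', useq τ - useq (τ + 1)⟫) →
      (T : ℝ) ≤ Ω ^ 2 * L ^ 2 / ℓ ^ 2 + 1) :=
  stmt14_general Y hYcl hYbd nrm hnrm_add hnrm_smul hnrm_zero dnrm hdnrm ω hωcont hωconv Yo hYo ω'
    hω'sub hstrong Ω hΩ L ℓ hℓ Y' hY'cv hY'Y u u' hu hu' humin g hgL hgℓ
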